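/- For every integer n ≥ 2, the number of tuples (x_1,…,x_{n−1}, y_2,…,y_{n−1}) of nonnegative integers satisfying x_1 + (y_2 + y_3 + ⋯ + y_{n−1}) = n − 2 and x_d + (y_d + y_{d+1} + ⋯ + y_{n−1}) = n − 1 − d for each 2 ≤ d ≤ n − 1, equals the Catalan number C_{n−2} = binom(2n−4, n−2)/(n−1). -/
import Mathlib

/-- prefix sum of `u` up to index `c` (inclusive, as naturals). -/
def pref {m : ℕ} (u : Fin m → ℕ) (c : ℕ) : ℕ :=
  ∑ j : Fin m, if (j : ℕ) ≤ c then u j else 0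

/-- sequences with prefix sums bounded by `k + c`. -/
def T (m c : ℕ) : Type :=
  {u : Fin m → ℕ // ∀ k : Fin m, pref u (k : ℕ) ≤ (k : ℕ) + c}

/-- ballot-type counting function. -/
def g : ℕ → ℕ → ℕ
  | 0, _ => 1
  | m + 1, c => ∑ u ∈ Finset.range (c + 1), g m (c - u + 1)

lemma g_zero (c : ℕ) : g 0 c = 1 := rfl

lemma g_succ (m c : ℕ) : g (m + 1) c = ∑ u ∈ Finset.range (c + 1), g m (c - u + 1) := rfl

lemma g_succ_zero (m : ℕ) : g (m + 1) 0 = g m 1 := by simp [g_succ]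

lemma g_succ_succ (m c : ℕ) : g (m + 1) (c + 1) = g (m + 1) c + g m (c + 2) := by
  rw [g_succ, Finset.sum_range_succ', g_succ]
  congr 1
  apply Finset.sum_congr rfl; intro u hu; congr 1; omega

lemma pref_zero {m : ℕ} (u : Fin (m + 1) → ℕ) : pref u 0 = u 0 := by
  rw [pref, Fin.sum_univ_succ]
  simp

lemma pref_succ {m : ℕ} (u : Fin (m + 1) → ℕ) (c : ℕ) :
    pref u (c + 1) = u 0 + pref (fun j => u j.succ) c := by
  rw [pref, Fin.sum_univ_succ, pref]
  simp only [Fin.val_zero, Nat.zero_le, if_true, Fin.val_succ]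
  congr 1
  apply Finset.sum_congr rfl
  intro j _
  congr 1
  simp only [eq_iff_iff]
  omega

/-- Splitting off the first entry of a bounded sequence. -/
def Tsucc (m c : ℕ) : T (m + 1) c ≃ Σ u0 : Fin (c + 1), T m (c - (u0 : ℕ) + 1) where
  toFun u :=
    ⟨⟨u.1 0, by
      have h := u.2 0
      simp only [Fin.val_zero] at h
      rw [pref_zero] at h
      omega⟩,
     ⟨fun j => u.1 j.succ, by
      intro k
      have h := u.2 k.succ
      simp only [Fin.val_succ] at h
      rw [pref_succ] at h
      have h0 := u.2 0
      simp only [Fin.val_zero] at h0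
      rw [pref_zero] at h0
      show pref (fun j => u.1 j.succ) (k : ℕ) ≤ (k : ℕ) + (c - u.1 0 + 1)
      omega⟩⟩
  invFun p :=
    ⟨Fin.cons (p.1 : ℕ) p.2.1, by
      intro k
      have hu0 : (p.1 : ℕ) ≤ c := Nat.lt_succ_iff.mp p.1.isLt
      refine Fin.cases ?_ ?_ k
      · simp only [Fin.val_zero]
        rw [pref_zero]
        simpa using hu0
      · intro j
        simp only [Fin.val_succ]
        rw [pref_succ]
        have h := p.2.2 j
        have e : pref (fun i => Fin.cons (α := fun _ => ℕ) (p.1 : ℕ) p.2.1 i.succ) (j : ℕ)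
            = pref p.2.1 (j : ℕ) := by
          unfold pref; apply Finset.sum_congr rfl; intro i _; simp
        rw [Fin.cons_zero, e]
        omega⟩
  left_inv u := by
    apply Subtype.ext
    exact Fin.cons_self_tail u.1
  right_inv p := by
    rcases p with ⟨u0, v, hv⟩
    apply Sigma.ext
    · simp
    · apply heq_of_eq
      apply Subtype.ext
      simp [Fin.tail_cons]

lemma finite_T (m c : ℕ) : Finite (T m c) := by
  apply Finite.of_injective (fun u : T m c => fun j : Fin m => (⟨u.1 j, by
    have h1 : u.1 j ≤ pref u.1 (j : ℕ) := by
      rw [pref]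
      refine Finset.single_le_sum (f := fun i : Fin m => if (i : ℕ) ≤ (j : ℕ) then u.1 i else 0)
        (fun i _ => by positivity) (Finset.mem_univ j) |>.trans_eq' ?_
      simp
    have h2 := u.2 j
    have := j.isLt
    omega⟩ : Fin (m + c)))
  intro u v h
  apply Subtype.ext
  funext j
  have := congrFun h j
  simpa [Fin.mk.injEq] using this

instance (m c : ℕ) : Finite (T m c) := finite_T m c

lemma nat_card_sigma {ι : Type*} [Fintype ι] {f : ι → Type*} [∀ i, Finite (f i)] :
    Nat.card (Σ i, f i) = ∑ i, Nat.card (f i) := by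
  letI : ∀ i, Fintype (f i) := fun i => Fintype.ofFinite _
  simp [Nat.card_eq_fintype_card, Fintype.card_sigma]

lemma card_T : ∀ m c, Nat.card (T m c) = g m c := by
  intro m
  induction m with
  | zero =>
    intro c
    rw [g_zero]
    have : Subsingleton (T 0 c) := by
      constructor
      rintro ⟨u, _⟩ ⟨v, _⟩
      apply Subtype.ext
      funext j
      exact j.elim0
    have : Nonempty (T 0 c) := ⟨⟨fun j => j.elim0, fun k => k.elim0⟩⟩
    exact Nat.card_unique
  | succ m ih =>
    intro c
    rw [Nat.card_congr (Tsucc m c), nat_card_sigma]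
    simp_rw [ih]
    rw [g_succ, ← Fin.sum_univ_eq_sum_range (fun u => g m (c - u + 1)) (c + 1)]

lemma g_identity : ∀ m c, (m + c + 1) * g m c = (c + 1) * Nat.choose (2 * m + c) m := by
  intro m
  induction m with
  | zero => intro c; simp [g_zero]
  | succ m ih =>
    intro c
    induction c with
    | zero =>
      simp only [Nat.add_zero, Nat.zero_add, one_mul, g_succ_zero]
      have h1 := ih 1
      have hsymm : Nat.choose (2 * m + 1) (m + 1) = Nat.choose (2 * m + 1) m := by
        rw [← Nat.choose_symm (show m + 1 ≤ 2 * m + 1 by omega)]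
        congr 1
        omega
      have hp : Nat.choose (2 * (m + 1)) (m + 1)
          = Nat.choose (2 * m + 1) m + Nat.choose (2 * m + 1) (m + 1) := by
        rw [show 2 * (m + 1) = (2 * m + 1) + 1 from by ring]
        exact Nat.choose_succ_succ _ _
      rw [hp, hsymm, h1]
      ring
    | succ c ihc =>
      -- target : (m + 1 + (c + 1) + 1) * g (m+1) (c+1) = (c + 2) * choose (2m + c + 3) (m+1)
      rw [g_succ_succ]
      set X := Nat.choose (2 * m + c + 2) (m + 1) with hX
      set Y := Nat.choose (2 * m + c + 2) m with hY
      have h1 : (m + c + 2) * g (m + 1) c = (c + 1) * X := by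
        have := ihc
        have hx : 2 * (m + 1) + c = 2 * m + c + 2 := by omega
        rw [hx] at this
        calc (m + c + 2) * g (m + 1) c = (m + 1 + c + 1) * g (m + 1) c := by ring_nf
          _ = (c + 1) * X := this
      have h2 : (m + c + 3) * g m (c + 2) = (c + 3) * Y := by
        have := ih (c + 2)
        have hx : 2 * m + (c + 2) = 2 * m + c + 2 := by omega
        rw [hx] at this
        calc (m + c + 3) * g m (c + 2) = (m + (c + 2) + 1) * g m (c + 2) := by ring_nf
          _ = (c + 3) * Y := this
      have h3 : (m + 1) * X = (m + c + 2) * Y := by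
        have hh := Nat.choose_succ_right_eq (2 * m + c + 2) m
        have hx : 2 * m + c + 2 - m = m + c + 2 := by omega
        rw [hx] at hh
        rw [hX, hY, mul_comm (m + 1), mul_comm (m + c + 2)]
        exact hh
      have hp : Nat.choose (2 * (m + 1) + (c + 1)) (m + 1) = Y + X := by
        have := Nat.choose_succ_succ (2 * m + c + 2) m
        rw [hX, hY]
        convert this using 2 <;> omega
      rw [hp]
      have h1' : ((m : ℤ) + c + 2) * g (m + 1) c = ((c : ℤ) + 1) * X := by exact_mod_cast h1
      have h2' : ((m : ℤ) + c + 3) * g m (c + 2) = ((c : ℤ) + 3) * Y := by exact_mod_cast h2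
      have h3' : ((m : ℤ) + 1) * X = ((m : ℤ) + c + 2) * Y := by exact_mod_cast h3
      have key : ((m : ℤ) + c + 2) * (((m : ℤ) + 1 + (c + 1) + 1) * (g (m + 1) c + g m (c + 2)))
          = ((m : ℤ) + c + 2) * (((c : ℤ) + 1 + 1) * ((Y : ℤ) + X)) := by
        linear_combination ((m : ℤ) + c + 3) * h1' + ((m : ℤ) + c + 2) * h2' - h3'
      have keyN : (m + c + 2) * ((m + 1 + (c + 1) + 1) * (g (m + 1) c + g m (c + 2)))
          = (m + c + 2) * ((c + 1 + 1) * (Y + X)) := by exact_mod_cast key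
      exact Nat.eq_of_mul_eq_mul_left (by omega) keyN

lemma g_catalan (m : ℕ) : g m 0 = catalan m := by
  have h := g_identity m 0
  have hc := succ_mul_catalan_eq_centralBinom m
  rw [Nat.centralBinom] at hc
  simp only [Nat.add_zero, Nat.zero_add, one_mul] at h
  have : (m + 1) * g m 0 = (m + 1) * catalan m := by omega
  exact Nat.eq_of_mul_eq_mul_left (by omega) this

lemma pref_rev {m : ℕ} (u : Fin m → ℕ) (c : ℕ) :
    pref (fun k => u (Fin.rev k)) c
      = ∑ j ∈ Finset.univ.filter (fun j : Fin m => (Fin.rev j : ℕ) ≤ c), u j := by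
  rw [pref, Finset.sum_filter]
  exact Fintype.sum_equiv Fin.revPerm _ _ (fun x => by simp [Fin.rev_rev])

lemma sum_univ_rev {m : ℕ} (u : Fin m → ℕ) : ∑ j, u (Fin.rev j) = ∑ j, u j :=
  Fintype.sum_equiv Fin.revPerm _ _ (fun x => by simp [Fin.rev_rev])

lemma sum_filter_rev {m : ℕ} (f : Fin m → ℕ) (P : Fin m → Prop) [DecidablePred P] :
    ∑ j ∈ Finset.univ.filter P, f (Fin.rev j)
      = ∑ j ∈ Finset.univ.filter (fun j => P (Fin.rev j)), f j := by
  refine Finset.sum_nbij' Fin.rev Fin.rev ?_ ?_ ?_ ?_ ?_ <;>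
    intro a ha <;> simp_all [Fin.rev_rev]

lemma pref_all {m : ℕ} (u : Fin m → ℕ) {c : ℕ} (h : ∀ j : Fin m, (j : ℕ) ≤ c) :
    pref u c = ∑ j, u j := by
  rw [pref]
  exact Finset.sum_congr rfl fun j _ => by rw [if_pos (h j)]

/-- The subtype appearing in the statement, for `n = m + 2`. -/
def Ssub (m : ℕ) : Type := {p : (Fin (m + 1) → ℕ) × (Fin m → ℕ) //
  (p.1 ⟨0, Nat.succ_pos m⟩ + ∑ j, p.2 j = m) ∧
  (∀ d : ℕ, ∀ _h1 : 2 ≤ d, ∀ _h2 : d ≤ m + 1,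
    p.1 ⟨d - 1, by omega⟩ +
      ∑ j ∈ Finset.univ.filter (fun j : Fin m => d ≤ (j : ℕ) + 2), p.2 j = m + 1 - d)}

def equivST (m : ℕ) : Ssub m ≃ T m 0 where
  toFun p :=
    ⟨fun k => p.1.2 (Fin.rev k), by
      intro k
      have hk := k.isLt
      have hB := p.2.2 (m + 1 - (k : ℕ)) (by omega) (by omega)
      rw [pref_rev]
      have hfil : (Finset.univ.filter fun j : Fin m => (Fin.rev j : ℕ) ≤ (k : ℕ))
          = Finset.univ.filter (fun j : Fin m => (m + 1 - (k : ℕ)) ≤ (j : ℕ) + 2) := by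
        apply Finset.filter_congr
        intro j _
        have hj := j.isLt
        simp only [Fin.val_rev, eq_iff_iff]
        omega
      rw [hfil]
      omega⟩
  invFun u :=
    ⟨(fun i => (m - (i : ℕ)) - pref u.1 (m - (i : ℕ)), fun j => u.1 (Fin.rev j)), by
      have hbound : ∀ c : ℕ, c < m → pref u.1 c ≤ c := by
        intro c hc
        have := u.2 ⟨c, hc⟩
        simpa using this
      have htot : pref u.1 m = ∑ j, u.1 j := pref_all _ (fun j => le_of_lt j.isLt)
      have htotle : (∑ j, u.1 j) ≤ m := by
        rcases Nat.eq_zero_or_pos m with h | h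
        · subst h
          simp
        · have h1 : pref u.1 (m - 1) = ∑ j, u.1 j :=
            pref_all _ (fun j => by have := j.isLt; omega)
          have h2 := hbound (m - 1) (by omega)
          omega
      constructor
      · show (m - 0) - pref u.1 (m - 0) + (∑ j, u.1 (Fin.rev j)) = m
        rw [sum_univ_rev, Nat.sub_zero, htot]
        omega
      · intro d h1 h2
        show (m - (d - 1)) - pref u.1 (m - (d - 1))
            + (∑ j ∈ Finset.univ.filter (fun j : Fin m => d ≤ (j : ℕ) + 2), u.1 (Fin.rev j))
            = m + 1 - d
        have hsum : (∑ j ∈ Finset.univ.filter (fun j : Fin m => d ≤ (j : ℕ) + 2), u.1 (Fin.rev j))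
            = pref u.1 (m + 1 - d) := by
          rw [sum_filter_rev, pref, Finset.sum_filter]
          refine Finset.sum_congr rfl fun j _ => ?_
          have hj := j.isLt
          congr 1
          simp only [Fin.val_rev, eq_iff_iff]
          omega
        have hmd : m - (d - 1) = m + 1 - d := by omega
        have hple : pref u.1 (m + 1 - d) ≤ m + 1 - d := hbound _ (by omega)
        rw [hsum, hmd]
        omega⟩
  left_inv p := by
    apply Subtype.ext
    apply Prod.ext
    · funext i
      show (m - (i : ℕ)) - pref (fun k => p.1.2 (Fin.rev k)) (m - (i : ℕ)) = p.1.1 i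
      rw [pref_rev]
      rcases Nat.eq_zero_or_pos (i : ℕ) with hi | hi
      · have hA := p.2.1
        have hfil : (Finset.univ.filter fun j : Fin m => (Fin.rev j : ℕ) ≤ m - (i : ℕ))
            = Finset.univ := by
          apply Finset.filter_true_of_mem
          intro j _
          have := j.isLt
          simp only [Fin.val_rev]
          omega
        rw [hfil]
        have hieq : i = ⟨0, Nat.succ_pos m⟩ := Fin.ext hi
        rw [hieq]
        omega
      · have hil := i.isLt
        have hB : p.1.1 i +
            ∑ j ∈ Finset.univ.filter (fun j : Fin m => (i : ℕ) + 1 ≤ (j : ℕ) + 2), p.1.2 j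
            = m + 1 - ((i : ℕ) + 1) := p.2.2 ((i : ℕ) + 1) (by omega) (by omega)
        have hfil : (Finset.univ.filter fun j : Fin m => (Fin.rev j : ℕ) ≤ m - (i : ℕ))
            = Finset.univ.filter (fun j : Fin m => (i : ℕ) + 1 ≤ (j : ℕ) + 2) := by
          apply Finset.filter_congr
          intro j _
          have := j.isLt
          simp only [Fin.val_rev, eq_iff_iff]
          omega
        rw [hfil]
        omega
    · funext j
      show p.1.2 (Fin.rev (Fin.rev j)) = p.1.2 j
      rw [Fin.rev_rev]
  right_inv u := by
    apply Subtype.ext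
    funext k
    show u.1 (Fin.rev (Fin.rev k)) = u.1 k
    rw [Fin.rev_rev]

theorem key (m : ℕ) : Nat.card (Ssub m) = catalan m := by
  rw [Nat.card_congr (equivST m), card_T, g_catalan]

theorem stmt1 (n : ℕ) (hn : 2 ≤ n) :
    Nat.card {p : (Fin (n - 1) → ℕ) × (Fin (n - 2) → ℕ) //
      (p.1 ⟨0, by omega⟩ + ∑ j, p.2 j = n - 2) ∧
      (∀ d : ℕ, ∀ _h1 : 2 ≤ d, ∀ _h2 : d ≤ n - 1,
        p.1 ⟨d - 1, by omega⟩ +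
          ∑ j ∈ Finset.univ.filter (fun j : Fin (n - 2) => d ≤ (j : ℕ) + 2), p.2 j
        = n - 1 - d)} = catalan (n - 2) := by
  obtain ⟨m, rfl⟩ : ∃ m, n = m + 2 := ⟨n - 2, by omega⟩
  exact key m
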